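/- Let l be either D or T. A modal formula φ that is satisfiable for l is complete for l if and only if P(φ) = ∅. -/

import Mathlib

/-- Modal formulas in negation normal form, as in the paper:
φ ::= ⊥ | ⊤ | p | ¬p | φ∧φ | φ∨φ | □φ | ◇φ. -/
inductive Form : Type where
  | bot : Form
  | top : Form
  | pos : ℕ → Form
  | npos : ℕ → Form
  | and : Form → Form → Form
  | or : Form → Form → Form
  | box : Form → Form
  | dia : Form → Form
deriving DecidableEq

namespace Form

/-- Negation, defined as usual (by De Morgan dualities). -/
def neg : Form → Form
  | bot => top
  | top => bot
  | pos p => npos p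
  | npos p => pos p
  | and φ ψ => or φ.neg ψ.neg
  | or φ ψ => and φ.neg ψ.neg
  | box φ => dia φ.neg
  | dia φ => box φ.neg

/-- Implication φ → ψ, defined as usual. -/
def imp (φ ψ : Form) : Form := or φ.neg ψ

/-- Bi-implication φ ↔ ψ, defined as usual. -/
def biimp (φ ψ : Form) : Form := and (imp φ ψ) (imp ψ φ)

/-- P(φ): the set of propositional variables occurring in φ. -/
def vars : Form → Finset ℕ
  | bot => ∅
  | top => ∅
  | pos p => {p}
  | npos p => {p}
  | and φ ψ => φ.vars ∪ ψ.vars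
  | or φ ψ => φ.vars ∪ ψ.vars
  | box φ => φ.vars
  | dia φ => φ.vars

/-- Modal depth. -/
def md : Form → ℕ
  | bot => 0
  | top => 0
  | pos _ => 0
  | npos _ => 0
  | and φ ψ => max φ.md ψ.md
  | or φ ψ => max φ.md ψ.md
  | box φ => φ.md + 1
  | dia φ => φ.md + 1

/-- sub(φ): the set of subformulas of φ. -/
def subf : Form → Finset Form
  | bot => {bot}
  | top => {top}
  | pos p => {pos p}
  | npos p => {npos p}
  | and φ ψ => insert (and φ ψ) (φ.subf ∪ ψ.subf)
  | or φ ψ => insert (or φ ψ) (φ.subf ∪ ψ.subf)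
  | box φ => insert (box φ) φ.subf
  | dia φ => insert (dia φ) φ.subf

/-- s̄ub(φ) = sub(φ) ∪ {¬ψ : ψ ∈ sub(φ)}. -/
def subBar (φ : Form) : Finset Form := φ.subf ∪ φ.subf.image neg

/-- □^k φ : k nested boxes. -/
def boxIter : ℕ → Form → Form
  | 0, φ => φ
  | n + 1, φ => box (boxIter n φ)

def isDia : Form → Bool
  | dia _ => true
  | _ => false

def isBox : Form → Bool
  | box _ => true
  | _ => false

end Form

/-- Big conjunction over a finite set of formulas (⋀∅ = ⊤). -/
noncomputable def bigAnd (s : Finset Form) : Form := s.toList.foldr Form.and Form.top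

/-- Big disjunction over a finite set of formulas (⋁∅ = ⊥). -/
noncomputable def bigOr (s : Finset Form) : Form := s.toList.foldr Form.or Form.bot

/-- th(a) = ⋀ a. -/
noncomputable def th (a : Finset Form) : Form := bigAnd a

/-- A finite Kripke model: a nonempty finite set of states, an accessibility
relation and a valuation. -/
structure Model : Type 1 where
  W : Type
  nonempty : Nonempty W
  finite : Finite W
  R : W → W → Prop
  V : W → Set ℕ

/-- Satisfaction M,w ⊨ φ. -/
def Model.sat (M : Model) : M.W → Form → Prop
  | _, .bot => False
  | _, .top => True
  | w, .pos p => p ∈ M.V w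
  | w, .npos p => p ∉ M.V w
  | w, .and φ ψ => M.sat w φ ∧ M.sat w ψ
  | w, .or φ ψ => M.sat w φ ∨ M.sat w ψ
  | w, .box φ => ∀ v, M.R w v → M.sat v φ
  | w, .dia φ => ∃ v, M.R w v ∧ M.sat v φ

/-- The six base logics K, D, T, K4, KD4, S4. -/
inductive BaseLogic : Type where
  | K | D | T | K4 | KD4 | S4
deriving DecidableEq

/-- A logic: a base logic, possibly extended by axiom 5. -/
structure Logic : Type where
  base : BaseLogic
  has5 : Bool
deriving DecidableEq

def Logic.K : Logic := ⟨.K, false⟩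
def Logic.D : Logic := ⟨.D, false⟩
def Logic.T : Logic := ⟨.T, false⟩
def Logic.K4 : Logic := ⟨.K4, false⟩
def Logic.KD4 : Logic := ⟨.KD4, false⟩
def Logic.S4 : Logic := ⟨.S4, false⟩

/-- l + 5. -/
def BaseLogic.plus5 (b : BaseLogic) : Logic := ⟨b, true⟩

/-- M is a model for the logic l (frame conditions). -/
def Model.IsFor (M : Model) (l : Logic) : Prop :=
  (match l.base with
    | .K => True
    | .D => ∀ w, ∃ v, M.R w v
    | .T => ∀ w, M.R w w
    | .K4 => ∀ a b c, M.R a b → M.R b c → M.R a c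
    | .KD4 => (∀ w, ∃ v, M.R w v) ∧ (∀ a b c, M.R a b → M.R b c → M.R a c)
    | .S4 => (∀ w, M.R w w) ∧ (∀ a b c, M.R a b → M.R b c → M.R a c))
  ∧ (l.has5 = true → ∀ a b c, M.R a b → M.R a c → M.R b c)

/-- φ is satisfiable for l: satisfied at some state of some finite model for l. -/
def Satisfiable (l : Logic) (φ : Form) : Prop :=
  ∃ M : Model, M.IsFor l ∧ ∃ w : M.W, M.sat w φ

/-- φ is valid for l: satisfied at every state of every finite model for l. -/
def Valid (l : Logic) (φ : Form) : Prop :=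
  ∀ M : Model, M.IsFor l → ∀ w : M.W, M.sat w φ

/-- φ is complete for l: for every ψ ∈ L(P(φ)), φ→ψ or φ→¬ψ is valid for l. -/
def Complete (l : Logic) (φ : Form) : Prop :=
  ∀ ψ : Form, ψ.vars ⊆ φ.vars → (Valid l (φ.imp ψ) ∨ Valid l (φ.imp ψ.neg))

/-- Z is a bisimulation modulo P from M to M'. -/
def IsBisim (P : Set ℕ) (M M' : Model) (Z : M.W → M'.W → Prop) : Prop :=
  (∃ s s', Z s s') ∧
  ∀ s s', Z s s' →
    (M.V s ∩ P = M'.V s' ∩ P) ∧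
    (∀ t, M.R s t → ∃ t', M'.R s' t' ∧ Z t t') ∧
    (∀ t', M'.R s' t' → ∃ t, M.R s t ∧ Z t t')

/-- (M,a) ∼_P (M',a'). -/
def Bisimilar (P : Set ℕ) (M : Model) (a : M.W) (M' : Model) (a' : M'.W) : Prop :=
  ∃ Z, IsBisim P M M' Z ∧ Z a a'

/-- (M,a) ≡_P (M',a'): the two pointed models satisfy the same formulas of L(P). -/
def EquivP (P : Set ℕ) (M : Model) (a : M.W) (M' : Model) (a' : M'.W) : Prop :=
  ∀ φ : Form, ↑φ.vars ⊆ P → (M.sat a φ ↔ M'.sat a' φ)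

/-- (M,s) is flat (for base logic l, with axiom 5): the carrier is {s}∪W and
R = R1 ∪ R2 with R1 ⊆ {s}×W, R2 an equivalence relation on W, and s ∈ W if
l ∈ {T,S4}. -/
def Flat (l : BaseLogic) (M : Model) (s : M.W) : Prop :=
  ∃ W : Set M.W, (∀ w, w = s ∨ w ∈ W) ∧
    ∃ R1 R2 : M.W → M.W → Prop,
      (∀ x y, M.R x y ↔ (R1 x y ∨ R2 x y)) ∧
      (∀ x y, R1 x y → x = s ∧ y ∈ W) ∧
      (∀ x y, R2 x y → x ∈ W ∧ y ∈ W) ∧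
      (∀ x ∈ W, R2 x x) ∧
      (∀ x y, R2 x y → R2 y x) ∧
      (∀ x y z, R2 x y → R2 y z → R2 x z) ∧
      ((l = .T ∨ l = .S4) → s ∈ W)

/-- A maximal state for l with respect to φ: a maximally l-consistent subset
of s̄ub(φ). -/
def MaxState (l : Logic) (φ : Form) (a : Finset Form) : Prop :=
  a ⊆ φ.subBar ∧ Satisfiable l (th a) ∧ ∀ ψ ∈ φ.subf, ψ ∈ a ∨ ψ.neg ∈ a

/-- D(x) = {◇ψ : ◇ψ ∈ x}. -/
def DSet (x : Finset Form) : Finset Form := x.filter (fun ψ => ψ.isDia = true)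

/-- B(x) = {□ψ : □ψ ∈ x}. -/
def BSet (x : Finset Form) : Finset Form := x.filter (fun ψ => ψ.isBox = true)

/-- A view: a parent-state and a finite set of children-states. -/
structure View : Type where
  parent : Finset Form
  children : Finset (Finset Form)

/-- The view is with respect to φ: all its states are subsets of s̄ub(φ). -/
def View.WF (φ : Form) (S : View) : Prop :=
  S.parent ⊆ φ.subBar ∧ ∀ c ∈ S.children, c ⊆ φ.subBar

/-- A set of formulas is l-closed. -/
def LClosed (l : Logic) (P : Finset ℕ) (s : Finset Form) : Prop :=
  (∀ φ1 φ2 : Form, Form.and φ1 φ2 ∈ s → φ1 ∈ s ∧ φ2 ∈ s) ∧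
  (∀ φ1 φ2 : Form, Form.or φ1 φ2 ∈ s → φ1 ∈ s ∨ φ2 ∈ s) ∧
  ((l.base = .T ∨ l.base = .S4) → ∀ ψ : Form, Form.box ψ ∈ s → ψ ∈ s) ∧
  (∀ p ∈ P, Form.pos p ∈ s ∨ Form.npos p ∈ s)

/-- The view S is l-complete. -/
def ViewLComplete (l : Logic) (P : Finset ℕ) (S : View) : Prop :=
  LClosed l P S.parent ∧
  (∀ c ∈ S.children, LClosed l P c) ∧
  (∀ ψ : Form, Form.dia ψ ∈ S.parent → ∃ c ∈ S.children, ψ ∈ c) ∧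
  (∀ ψ : Form, Form.box ψ ∈ S.parent → ∀ c ∈ S.children, ψ ∈ c) ∧
  ((l.base = .K4 ∨ l.base = .KD4 ∨ l.base = .S4) →
    ∀ ψ : Form, Form.box ψ ∈ S.parent → ∀ c ∈ S.children, Form.box ψ ∈ c) ∧
  (l.base = .KD4 → S.children.Nonempty)

/-- The view S is consistent for l: every one of its states is consistent. -/
def ViewConsistent (l : Logic) (S : View) : Prop :=
  Satisfiable l (th S.parent) ∧ ∀ c ∈ S.children, Satisfiable l (th c)

/-- d = max{md(th(c')) : c' ∈ C(S)}. -/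
noncomputable def childDepth (S : View) : ℕ := S.children.sup (fun c => (th c).md)

/-- A K-maximal child-state: a maximally K-consistent subset of s̄ub_d(φ). -/
def KMaxChild (φ : Form) (d : ℕ) (c : Finset Form) : Prop :=
  c ⊆ φ.subBar.filter (fun ψ => ψ.md ≤ d) ∧
  Satisfiable Logic.K (th c) ∧
  ∀ ψ ∈ φ.subf, ψ.md ≤ d → (ψ ∈ c ∨ ψ.neg ∈ c)

/-- S' completes S (for logic l, with respect to φ). -/
def ViewCompletes (l : Logic) (φ : Form) (S' S : View) : Prop :=
  ViewLComplete l φ.vars S' ∧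
  S.parent ⊆ S'.parent ∧
  (∀ a ∈ S.children, ∃ a' ∈ S'.children, a ⊆ a') ∧
  (l.base = .K → ∀ a' ∈ S'.children, KMaxChild φ (childDepth S') a') ∧
  (l.base ≠ .K → ∀ a' ∈ S'.children, MaxState l φ a')

/-- The depth-0 normal form ⋀_{p∈S} p ∧ ⋀_{p∈P∖S} ¬p. -/
noncomputable def nf0 (P S : Finset ℕ) : Form :=
  Form.and (bigAnd (S.image Form.pos)) (bigAnd ((P \ S).image Form.npos))

/-- Fine's normal forms F_P^d. -/
noncomputable def NF (P : Finset ℕ) : ℕ → Set Form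
  | 0 => { χ | ∃ S ⊆ P, χ = nf0 P S }
  | d + 1 => { χ | ∃ S : Finset Form, ↑S ⊆ NF P d ∧ ∃ S0 ⊆ P,
      χ = Form.and (nf0 P S0)
            (Form.and (bigAnd (S.image Form.dia)) (Form.box (bigOr S))) }

/-- φ is complete up to its depth for l. -/
def CompleteUpToDepth (l : Logic) (φ : Form) : Prop :=
  ∀ ψ : Form, ψ.vars ⊆ φ.vars → ψ.md ≤ φ.md →
    (Valid l (φ.imp ψ) ∨ Valid l (φ.imp ψ.neg))

/-!
If `P(φ) = ∅`, every formula over `P(φ)` is variable-free, and on serial frames a variable-free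
formula has the same truth value at every state, so it is either valid or refutable outright.

If `p ∈ P(φ)` and `M, w ⊨ φ` with `d = md(φ)`, stack `d + 1` copies of `M`, each seeing itself and
the next one, and let the last copy see a single reflexive point `z`. The states of the bottom
copy are `d`-bisimilar to those of `M`, so `φ` still holds at `(w, 0)`, while `z` is reachable from
`(w, 0)` in exactly `d + 1` steps. Hence `◇^{d+1} □^{d+1} p` holds at `(w, 0)` when `p` is true at
`z` and fails everywhere when it is false there; `φ` decides neither it nor its negation.
-/

namespace Form

def diaIter : ℕ → Form → Form
  | 0, χ => χ
  | n + 1, χ => dia (diaIter n χ)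

lemma neg_boxIter (χ : Form) (n : ℕ) : (boxIter n χ).neg = diaIter n χ.neg := by
  induction n with
  | zero => rfl
  | succ n ih => simp only [boxIter, diaIter, neg, ih]

@[simp]
lemma vars_boxIter (χ : Form) (n : ℕ) : (boxIter n χ).vars = χ.vars := by
  induction n with
  | zero => rfl
  | succ n ih => simpa only [boxIter, vars] using ih

@[simp]
lemma vars_diaIter (χ : Form) (n : ℕ) : (diaIter n χ).vars = χ.vars := by
  induction n with
  | zero => rfl
  | succ n ih => simpa only [diaIter, vars] using ih

/-- The truth value at the one-point reflexive model with empty valuation; on every serial model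
a variable-free formula takes this value at every state. -/
def pointValue : Form → Bool
  | bot => false
  | top => true
  | pos _ => false
  | npos _ => true
  | and φ ψ => φ.pointValue && ψ.pointValue
  | or φ ψ => φ.pointValue || ψ.pointValue
  | box φ => φ.pointValue
  | dia φ => φ.pointValue

end Form

namespace Model

variable (M : Model)

lemma sat_neg (χ : Form) (w : M.W) : M.sat w χ.neg ↔ ¬ M.sat w χ := by
  induction χ generalizing w with
  | and φ ψ ihφ ihψ => simp only [Form.neg, sat, ihφ, ihψ, not_and_or]
  | or φ ψ ihφ ihψ => simp only [Form.neg, sat, ihφ, ihψ, not_or]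
  | box φ ih => simp only [Form.neg, sat, ih, not_forall, exists_prop]
  | dia φ ih => simp only [Form.neg, sat, ih, not_exists, not_and]
  | _ => simp [Form.neg, sat]

lemma not_sat_diaIter {χ : Form} (h : ∀ v, ¬ M.sat v χ) (n : ℕ) (w : M.W) :
    ¬ M.sat w (Form.diaIter n χ) := by
  induction n generalizing w with
  | zero => exact h w
  | succ n ih => rintro ⟨v, -, hv⟩; exact ih v hv

variable {M}

lemma sat_iff_pointValue (hser : ∀ w, ∃ v, M.R w v) {χ : Form} (hχ : χ.vars = ∅)
    (w : M.W) : M.sat w χ ↔ χ.pointValue := by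
  induction χ generalizing w with
  | pos p | npos p => simp [Form.vars] at hχ
  | and φ ψ ihφ ihψ | or φ ψ ihφ ihψ =>
      rw [Form.vars, Finset.union_eq_empty] at hχ
      simp [sat, Form.pointValue, ihφ hχ.1, ihψ hχ.2]
  | box φ ih =>
      obtain ⟨v, hv⟩ := hser w
      simp only [sat, Form.pointValue, ih hχ]
      exact ⟨fun h => h v hv, fun h _ _ => h⟩
  | dia φ ih =>
      obtain ⟨v, hv⟩ := hser w
      simp only [sat, Form.pointValue, ih hχ]
      exact ⟨fun ⟨_, _, h⟩ => h, fun h => ⟨v, hv, h⟩⟩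
  | _ => simp [sat, Form.pointValue]

lemma IsFor.serial {l : Logic} (hl : l = Logic.D ∨ l = Logic.T) (hM : M.IsFor l) :
    ∀ w, ∃ v, M.R w v := by
  rcases hl with rfl | rfl
  · exact hM.1
  · exact fun w => ⟨w, hM.1 w⟩

def layered (M : Model) (d : ℕ) (U : Set ℕ) : Model where
  W := (M.W × Fin (d + 1)) ⊕ Unit
  nonempty := ⟨.inr ()⟩
  finite := by have := M.finite; infer_instance
  R
    | .inl (s, i), .inl (t, j) => M.R s t ∧ ((j : ℕ) = i ∨ (j : ℕ) = i + 1)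
    | .inl (_, i), .inr _ => (i : ℕ) = d
    | .inr _, .inr _ => True
    | .inr _, .inl _ => False
  V
    | .inl (s, _) => M.V s
    | .inr _ => U

variable {d : ℕ} {U : Set ℕ}

def layerIndex : (M.layered d U).W → ℕ
  | .inl (_, i) => i
  | .inr _ => d + 1

lemma layered_serial (hser : ∀ w, ∃ v, M.R w v) : ∀ x, ∃ y, (M.layered d U).R x y
  | .inl (s, i) => let ⟨t, ht⟩ := hser s; ⟨.inl (t, i), ht, .inl rfl⟩
  | .inr _ => ⟨.inr (), trivial⟩

lemma layered_refl (hrefl : ∀ w, M.R w w) : ∀ x, (M.layered d U).R x x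
  | .inl (s, _) => ⟨hrefl s, .inl rfl⟩
  | .inr _ => trivial

lemma IsFor.layered {l : Logic} (hl : l = Logic.D ∨ l = Logic.T) (hM : M.IsFor l) :
    (M.layered d U).IsFor l := by
  rcases hl with rfl | rfl
  · exact ⟨layered_serial hM.1, nofun⟩
  · exact ⟨layered_refl hM.1, nofun⟩

lemma sat_layered_inl_iff {χ : Form} {s : M.W} {i : Fin (d + 1)} (h : χ.md + i ≤ d) :
    (M.layered d U).sat (.inl (s, i)) χ ↔ M.sat s χ := by
  induction χ generalizing s i with
  | and φ ψ ihφ ihψ | or φ ψ ihφ ihψ =>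
      simp only [Form.md] at h
      simp only [sat, ihφ (by omega : φ.md + i ≤ d), ihψ (by omega : ψ.md + i ≤ d)]
  | box φ ih =>
      simp only [Form.md] at h
      have hup : (i : ℕ) + 1 < d + 1 := by omega
      constructor
      · intro hφ t ht
        exact (ih (i := ⟨i + 1, hup⟩) (by simp only; omega)).mp (hφ _ ⟨ht, .inr rfl⟩)
      · rintro hφ (⟨t, j⟩ | _) hR
        · exact (ih (i := j) (by have := hR.2; omega)).mpr (hφ t hR.1)
        · have : (i : ℕ) = d := hR
          omega
  | dia φ ih =>
      simp only [Form.md] at h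
      have hup : (i : ℕ) + 1 < d + 1 := by omega
      constructor
      · rintro ⟨⟨t, j⟩ | _, hR, hφ⟩
        · exact ⟨t, hR.1, (ih (i := j) (by have := hR.2; omega)).mp hφ⟩
        · have : (i : ℕ) = d := hR
          omega
      · rintro ⟨t, ht, hφ⟩
        exact ⟨.inl (t, ⟨i + 1, hup⟩), ⟨ht, .inr rfl⟩, (ih (by simp only; omega)).mpr hφ⟩
  | _ => rfl

lemma exists_layered_R_layerIndex (hser : ∀ w, ∃ v, M.R w v) (x : (M.layered d U).W) :
    ∃ y, (M.layered d U).R x y ∧ min (layerIndex x + 1) (d + 1) ≤ layerIndex y := by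
  rcases x with ⟨s, i⟩ | _
  · obtain ⟨t, ht⟩ := hser s
    by_cases hi : (i : ℕ) = d
    · exact ⟨.inr (), hi, by simp [layerIndex]⟩
    · exact ⟨.inl (t, ⟨i + 1, by omega⟩), ⟨ht, .inr rfl⟩, by simp [layerIndex]⟩
  · exact ⟨.inr (), trivial, by simp [layerIndex]⟩

lemma sat_diaIter_of_sat_inr (hser : ∀ w, ∃ v, M.R w v) {χ : Form}
    (hχ : (M.layered d U).sat (.inr ()) χ) :
    ∀ (n : ℕ) (x : (M.layered d U).W), d + 1 ≤ layerIndex x + n →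
      (M.layered d U).sat x (Form.diaIter n χ)
  | 0, .inl (_, i), h => absurd h (by simp [layerIndex]; omega)
  | 0, .inr (), _ => hχ
  | n + 1, x, h =>
      let ⟨y, hxy, hy⟩ := exists_layered_R_layerIndex hser x
      ⟨y, hxy, sat_diaIter_of_sat_inr hser hχ n y (by omega)⟩

lemma sat_inr_boxIter {χ : Form} (hχ : (M.layered d U).sat (.inr ()) χ) :
    ∀ n, (M.layered d U).sat (.inr ()) (Form.boxIter n χ)
  | 0 => hχ
  | n + 1 => fun
    | .inr (), _ => sat_inr_boxIter hχ n

end Model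

open Model in
lemma not_complete_of_mem_vars {l : Logic} (hl : l = Logic.D ∨ l = Logic.T) {φ : Form}
    (hsat : Satisfiable l φ) {p : ℕ} (hp : p ∈ φ.vars) : ¬ Complete l φ := by
  obtain ⟨M, hM, w, hw⟩ := hsat
  have hser := hM.serial hl
  set d := φ.md
  set ψ := Form.diaIter (d + 1) (Form.boxIter (d + 1) (.pos p))
  have hbottom : ∀ U, (M.layered d U).sat (.inl (w, 0)) φ := fun U =>
    (sat_layered_inl_iff (by simp [d])).mpr hw
  have hψ_true : (M.layered d {p}).sat (.inl (w, 0)) ψ := by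
    have hinr : (M.layered d {p}).sat (.inr ()) (Form.boxIter (d + 1) (.pos p)) :=
      sat_inr_boxIter (χ := .pos p) (Set.mem_singleton p) _
    exact sat_diaIter_of_sat_inr hser hinr _ _ (by simp [layerIndex])
  have hψ_false (x) : ¬ (M.layered d ∅).sat x ψ := by
    refine not_sat_diaIter _ (fun y => ?_) _ _
    rw [← sat_neg, Form.neg_boxIter]
    exact sat_diaIter_of_sat_inr hser (χ := .npos p) (Set.notMem_empty p) _ y (by omega)
  intro hcomp
  rcases hcomp ψ (by simpa [ψ, Form.vars] using hp) with hval | hval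
  · exact (hval _ (hM.layered hl) _).elim ((sat_neg _ _ _).mp · (hbottom ∅)) (hψ_false _)
  · exact (hval _ (hM.layered hl) _).elim ((sat_neg _ _ _).mp · (hbottom {p}))
      ((sat_neg _ _ _).mp · hψ_true)

lemma complete_of_vars_eq_empty {l : Logic} (hl : l = Logic.D ∨ l = Logic.T) {φ : Form}
    (hφ : φ.vars = ∅) : Complete l φ := by
  intro ψ hψ
  have hψ : ψ.vars = ∅ := Finset.subset_empty.mp (hφ ▸ hψ)
  cases hv : ψ.pointValue
  · right
    intro M hM w
    exact .inr <| (M.sat_neg ψ w).mpr <| by simp [Model.sat_iff_pointValue (hM.serial hl) hψ, hv]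
  · left
    intro M hM w
    exact .inr <| (Model.sat_iff_pointValue (hM.serial hl) hψ w).mpr hv

/-- for l ∈ {D,T}, a satisfiable formula is complete for l iff
it has no propositional variables. -/
theorem stmt6 (l : Logic) (hl : l = Logic.D ∨ l = Logic.T)
    (φ : Form) (hsat : Satisfiable l φ) :
    Complete l φ ↔ φ.vars = ∅ := by
  refine ⟨fun hcomp => ?_, complete_of_vars_eq_empty hl⟩
  by_contra hne
  obtain ⟨p, hp⟩ := Finset.nonempty_iff_ne_empty.mpr hne
  exact not_complete_of_mem_vars hl hsat hp hcomp
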